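/- For a connected graph G with Laplacian matrix L, resistance matrix R (entries R_{v,w} = r(v,w)), and curvature vector μ with μ_x = 1 − (1/2)Σ_{e∋x} r(e⁺,e⁻), the matrix identity I + (1/2)·L·R = μ·𝟙ᵀ holds, where 𝟙 is the all-ones vector. -/

import Mathlib

open scoped Classical
open Matrix

/-- A finite multigraph without loop edges, given by endpoint maps on an edge type. -/
structure Multigraph where
  V : Type
  E : Type
  [fintV : Fintype V]
  [fintE : Fintype E]
  fst : E → V
  snd : E → V
  no_loop : ∀ e, fst e ≠ snd e

namespace Multigraph

variable (G : Multigraph)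

instance : Fintype G.V := G.fintV
instance : Fintype G.E := G.fintE

/-- One step along an edge of the subgraph with edge set `S`. -/
def step (S : Finset G.E) (u v : G.V) : Prop :=
  ∃ e ∈ S, (G.fst e = u ∧ G.snd e = v) ∨ (G.fst e = v ∧ G.snd e = u)

/-- Two vertices are in the same component of the spanning subgraph with edge set `S`. -/
def reach (S : Finset G.E) : G.V → G.V → Prop :=
  Relation.EqvGen (G.step S)

/-- Number of connected components of the spanning subgraph with edge set `S`. -/
noncomputable def ncomp (S : Finset G.E) : ℕ :=
  Nat.card (Quotient (Relation.EqvGen.setoid (G.step S)))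

/-- The graph is connected. -/
def IsConnected : Prop := G.ncomp Finset.univ = 1

/-- `S` is the edge set of a spanning tree. -/
def IsSpanningTree (S : Finset G.E) : Prop :=
  G.ncomp S = 1 ∧ S.card + 1 = Fintype.card G.V

/-- `S` is the edge set of a two-component spanning forest. -/
def IsTwoForest (S : Finset G.E) : Prop :=
  G.ncomp S = 2 ∧ S.card + 2 = Fintype.card G.V

/-- `S` is the edge set of a three-component spanning forest. -/
def IsThreeForest (S : Finset G.E) : Prop :=
  G.ncomp S = 3 ∧ S.card + 3 = Fintype.card G.V

/-- κ(G): number of spanning trees. -/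
noncomputable def kappa : ℕ := Nat.card {S : Finset G.E // G.IsSpanningTree S}

/-- κ₂(G): number of two-component spanning forests. -/
noncomputable def kappa2 : ℕ := Nat.card {S : Finset G.E // G.IsTwoForest S}

/-- κ₂(x|y): number of two-forests with `x` and `y` in different components. -/
noncomputable def kappa2Sep (x y : G.V) : ℕ :=
  Nat.card {S : Finset G.E // G.IsTwoForest S ∧ ¬ G.reach S x y}

/-- κ₂(xy|q): number of two-forests with `x`, `y` in one component, `q` in the other. -/
noncomputable def kappa2Tog (x y q : G.V) : ℕ :=
  Nat.card {S : Finset G.E // G.IsTwoForest S ∧ G.reach S x y ∧ ¬ G.reach S x q}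

/-- κ₃(x|y|q): number of three-forests with `x`, `y`, `q` in pairwise distinct components. -/
noncomputable def kappa3Sep (x y q : G.V) : ℕ :=
  Nat.card {S : Finset G.E //
    G.IsThreeForest S ∧ ¬ G.reach S x y ∧ ¬ G.reach S x q ∧ ¬ G.reach S y q}

/-- Effective resistance: r(x,y) = κ₂(x|y)/κ(G). -/
noncomputable def res (x y : G.V) : ℝ := (G.kappa2Sep x y : ℝ) / (G.kappa : ℝ)

/-- Potential kernel: j_q(x,y) = κ₂(xy|q)/κ(G). -/
noncomputable def jfun (q x y : G.V) : ℝ := (G.kappa2Tog x y q : ℝ) / (G.kappa : ℝ)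

/-- Cut size |∂F| of a two-forest with edge set `S`: edges joining the two components. -/
noncomputable def cutSize (S : Finset G.E) : ℕ :=
  Nat.card {e : G.E // ¬ G.reach S (G.fst e) (G.snd e)}

/-- The curvature vector μ. -/
noncomputable def mu (x : G.V) : ℝ :=
  1 - (1/2) * ∑ e : G.E,
    (if G.fst e = x ∨ G.snd e = x then G.res (G.fst e) (G.snd e) else 0)

/-- The Laplacian matrix of `G`. -/
noncomputable def lap : Matrix G.V G.V ℝ := fun v w =>
  (if v = w then (Nat.card {e : G.E // G.fst e = v ∨ G.snd e = v} : ℝ) else 0)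
    - (Nat.card {e : G.E // (G.fst e = v ∧ G.snd e = w) ∨ (G.fst e = w ∧ G.snd e = v)} : ℝ)

/-- The effective resistance matrix of `G`. -/
noncomputable def resMatrix : Matrix G.V G.V ℝ := fun v w => G.res v w

variable {G}


lemma step_symm {S : Finset G.E} {u v : G.V} (h : G.step S u v) : G.step S v u := by
  obtain ⟨e, he, h⟩ := h; exact ⟨e, he, by tauto⟩

lemma reach_refl (S : Finset G.E) (a : G.V) : G.reach S a a := Relation.EqvGen.refl a

lemma reach_symm {S : Finset G.E} {a b : G.V} (h : G.reach S a b) : G.reach S b a :=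
  Relation.EqvGen.symm a b h

lemma reach_trans {S : Finset G.E} {a b c : G.V} (h : G.reach S a b) (h' : G.reach S b c) :
    G.reach S a c := Relation.EqvGen.trans a b c h h'

lemma reach_mono {S S' : Finset G.E} (hss : S ⊆ S') {a b : G.V} (h : G.reach S a b) :
    G.reach S' a b := by
  refine Relation.EqvGen.mono ?_ _ _ h
  rintro u v ⟨e, he, h⟩
  exact ⟨e, hss he, h⟩

lemma reach_of_mem {S : Finset G.E} {e : G.E} (he : e ∈ S) :
    G.reach S (G.fst e) (G.snd e) :=
  Relation.EqvGen.rel _ _ ⟨e, he, Or.inl ⟨rfl, rfl⟩⟩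

/-- Characterization of reach after inserting an edge. -/
lemma reach_insert_iff {S : Finset G.E} {e : G.E} {a b : G.V} :
    G.reach (insert e S) a b ↔ G.reach S a b ∨
      (G.reach S a (G.fst e) ∧ G.reach S (G.snd e) b) ∨
      (G.reach S a (G.snd e) ∧ G.reach S (G.fst e) b) := by
  constructor
  · intro h
    induction h with
    | rel u v h =>
      obtain ⟨f, hf, hor⟩ := h
      rcases Finset.mem_insert.mp hf with rfl | hf
      · rcases hor with ⟨h1, h2⟩ | ⟨h1, h2⟩
        · exact Or.inr (Or.inl ⟨h1 ▸ reach_refl S u, h2 ▸ reach_refl S v⟩)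
        · exact Or.inr (Or.inr ⟨h2 ▸ reach_refl S u, h1 ▸ reach_refl S v⟩)
      · exact Or.inl (Relation.EqvGen.rel _ _ ⟨f, hf, hor⟩)
    | refl u => exact Or.inl (reach_refl S u)
    | symm u v _ ih =>
      rcases ih with h | ⟨h1, h2⟩ | ⟨h1, h2⟩
      · exact Or.inl (reach_symm h)
      · exact Or.inr (Or.inr ⟨reach_symm h2, reach_symm h1⟩)
      · exact Or.inr (Or.inl ⟨reach_symm h2, reach_symm h1⟩)
    | trans u v w _ _ ih1 ih2 =>
      rcases ih1 with h | ⟨h1, h2⟩ | ⟨h1, h2⟩ <;>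
        rcases ih2 with h' | ⟨h1', h2'⟩ | ⟨h1', h2'⟩
      · exact Or.inl (reach_trans h h')
      · exact Or.inr (Or.inl ⟨reach_trans h h1', h2'⟩)
      · exact Or.inr (Or.inr ⟨reach_trans h h1', h2'⟩)
      · exact Or.inr (Or.inl ⟨h1, reach_trans h2 h'⟩)
      · exact Or.inr (Or.inl ⟨h1, h2'⟩)
      · exact Or.inl (reach_trans h1 h2')
      · exact Or.inr (Or.inr ⟨h1, reach_trans h2 h'⟩)
      · exact Or.inl (reach_trans h1 h2')
      · exact Or.inr (Or.inr ⟨h1, h2'⟩)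
  · rintro (h | ⟨h1, h2⟩ | ⟨h1, h2⟩)
    · exact reach_mono (Finset.subset_insert e S) h
    · exact reach_trans (reach_mono (Finset.subset_insert e S) h1)
        (reach_trans (reach_of_mem (Finset.mem_insert_self e S))
          (reach_mono (Finset.subset_insert e S) h2))
    · exact reach_trans (reach_mono (Finset.subset_insert e S) h1)
        (reach_trans (reach_symm (reach_of_mem (Finset.mem_insert_self e S)))
          (reach_mono (Finset.subset_insert e S) h2))

lemma quot_mk_eq_iff {S : Finset G.E} {a b : G.V} :
    (Quotient.mk (Relation.EqvGen.setoid (G.step S)) a =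
     Quotient.mk (Relation.EqvGen.setoid (G.step S)) b) ↔ G.reach S a b := by
  rw [Quotient.eq]; rfl

lemma ncomp_congr {S S' : Finset G.E} (h : ∀ a b, G.reach S a b ↔ G.reach S' a b) :
    G.ncomp S = G.ncomp S' := by
  have hs : Relation.EqvGen.setoid (G.step S) = Relation.EqvGen.setoid (G.step S') :=
    Setoid.ext fun a b => h a b
  rw [ncomp, ncomp, hs]

lemma ncomp_insert_of_reach {S : Finset G.E} {e : G.E}
    (h : G.reach S (G.fst e) (G.snd e)) :
    G.ncomp (insert e S) = G.ncomp S := by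
  refine ncomp_congr fun a b => ⟨fun hh => ?_, fun hh => reach_mono (Finset.subset_insert e S) hh⟩
  rcases reach_insert_iff.mp hh with h' | ⟨h1, h2⟩ | ⟨h1, h2⟩
  · exact h'
  · exact reach_trans h1 (reach_trans h h2)
  · exact reach_trans h1 (reach_trans (reach_symm h) h2)

lemma ncomp_insert_of_not_reach {S : Finset G.E} {e : G.E}
    (h : ¬ G.reach S (G.fst e) (G.snd e)) :
    G.ncomp (insert e S) + 1 = G.ncomp S := by
  classical
  let g : Quotient (Relation.EqvGen.setoid (G.step S)) →
      Quotient (Relation.EqvGen.setoid (G.step (insert e S))) :=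
    Quotient.map id (fun a b hab => reach_mono (Finset.subset_insert e S) hab)
  let f : Quotient (Relation.EqvGen.setoid (G.step S)) →
      Quotient (Relation.EqvGen.setoid (G.step (insert e S))) ⊕ Unit := fun c =>
    if c = Quotient.mk _ (G.snd e) then Sum.inr () else Sum.inl (g c)
  have hg : ∀ a : G.V, g (Quotient.mk _ a) = Quotient.mk _ a := fun a => rfl
  have hinj : Function.Injective f := by
    intro c d hcd
    induction c using Quotient.inductionOn with | _ a =>
    induction d using Quotient.inductionOn with | _ b =>
    by_cases hc : (Quotient.mk (Relation.EqvGen.setoid (G.step S)) a) = Quotient.mk _ (G.snd e)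
    · by_cases hd : (Quotient.mk (Relation.EqvGen.setoid (G.step S)) b) = Quotient.mk _ (G.snd e)
      · exact hc.trans hd.symm
      · rw [show f (Quotient.mk _ a) = Sum.inr () from if_pos hc,
          show f (Quotient.mk _ b) = Sum.inl (g (Quotient.mk _ b)) from if_neg hd] at hcd
        exact absurd hcd (by simp)
    · by_cases hd : (Quotient.mk (Relation.EqvGen.setoid (G.step S)) b) = Quotient.mk _ (G.snd e)
      · rw [show f (Quotient.mk _ a) = Sum.inl (g (Quotient.mk _ a)) from if_neg hc,
          show f (Quotient.mk _ b) = Sum.inr () from if_pos hd] at hcd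
        exact absurd hcd (by simp)
      · rw [show f (Quotient.mk _ a) = Sum.inl (g (Quotient.mk _ a)) from if_neg hc,
          show f (Quotient.mk _ b) = Sum.inl (g (Quotient.mk _ b)) from if_neg hd] at hcd
        have hcd2 : g (Quotient.mk _ a) = g (Quotient.mk _ b) := by
          injection hcd
        rw [hg, hg] at hcd2
        have hab : G.reach (insert e S) a b := quot_mk_eq_iff.mp hcd2
        rcases reach_insert_iff.mp hab with h' | ⟨h1, h2⟩ | ⟨h1, h2⟩
        · exact quot_mk_eq_iff.mpr h'
        · exact absurd (quot_mk_eq_iff.mpr (reach_symm h2)) hd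
        · exact absurd (quot_mk_eq_iff.mpr h1) hc
  have hsurj : Function.Surjective f := by
    rintro (d | ⟨⟩)
    · induction d using Quotient.inductionOn with | _ a =>
      by_cases ha : G.reach S a (G.snd e)
      · refine ⟨Quotient.mk _ (G.fst e), ?_⟩
        have hne : (Quotient.mk (Relation.EqvGen.setoid (G.step S)) (G.fst e)) ≠
            Quotient.mk _ (G.snd e) := fun hc => h (quot_mk_eq_iff.mp hc)
        simp only [f, if_neg hne, hg]
        refine congrArg Sum.inl (quot_mk_eq_iff.mpr ?_)
        exact reach_trans (reach_of_mem (Finset.mem_insert_self e S))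
          (reach_mono (Finset.subset_insert e S) (reach_symm ha))
      · refine ⟨Quotient.mk _ a, ?_⟩
        have hne : (Quotient.mk (Relation.EqvGen.setoid (G.step S)) a) ≠
            Quotient.mk _ (G.snd e) := fun hc => ha (quot_mk_eq_iff.mp hc)
        simp only [f, if_neg hne, hg]
    · exact ⟨Quotient.mk _ (G.snd e), by simp only [f, if_pos rfl]⟩
  have hcard := Nat.card_eq_of_bijective f ⟨hinj, hsurj⟩
  rw [ncomp, ncomp, hcard, Nat.card_sum]
  simp

lemma reach_empty {a b : G.V} (h : G.reach (∅ : Finset G.E) a b) : a = b := by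
  induction h with
  | rel u v h => obtain ⟨e, he, _⟩ := h; exact absurd he (by simp)
  | refl u => rfl
  | symm u v _ ih => exact ih.symm
  | trans u v w _ _ ih1 ih2 => exact ih1.trans ih2

lemma ncomp_empty : G.ncomp (∅ : Finset G.E) = Fintype.card G.V := by
  rw [ncomp]
  rw [Nat.card_congr (Equiv.ofBijective (Quotient.mk _) ⟨fun a b hab => reach_empty (quot_mk_eq_iff.mp hab), Quotient.mk_surjective⟩).symm]
  exact Nat.card_eq_fintype_card

lemma card_le_ncomp_add_card (S : Finset G.E) :
    Fintype.card G.V ≤ G.ncomp S + S.card := by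
  classical
  induction S using Finset.induction_on with
  | empty => simp [ncomp_empty]
  | @insert e S he ih =>
    rw [Finset.card_insert_of_notMem he]
    by_cases h : G.reach S (G.fst e) (G.snd e)
    · rw [ncomp_insert_of_reach h]; omega
    · have := ncomp_insert_of_not_reach h; omega

lemma ncomp_add_card_of_bridges {S : Finset G.E}
    (hb : ∀ e ∈ S, ¬ G.reach (S.erase e) (G.fst e) (G.snd e)) :
    G.ncomp S + S.card = Fintype.card G.V := by
  classical
  induction S using Finset.induction_on with
  | empty => simp [ncomp_empty]
  | @insert e S he ih =>
    have h1 : ¬ G.reach S (G.fst e) (G.snd e) := by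
      have := hb e (Finset.mem_insert_self e S)
      rwa [Finset.erase_insert he] at this
    have h2 := ncomp_insert_of_not_reach h1
    have h3 : ∀ f ∈ S, ¬ G.reach (S.erase f) (G.fst f) (G.snd f) := by
      intro f hf hr
      exact hb f (Finset.mem_insert_of_mem hf)
        (reach_mono (Finset.erase_subset_erase f (Finset.subset_insert e S)) hr)
    have := ih h3
    rw [Finset.card_insert_of_notMem he]
    omega

lemma reach_all_of_ncomp_one {S : Finset G.E} (h : G.ncomp S = 1) (a b : G.V) :
    G.reach S a b := by
  have := (Nat.card_eq_one_iff_unique.mp h).1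
  exact quot_mk_eq_iff.mp (Subsingleton.elim _ _)

lemma two_classes {S : Finset G.E} {a b : G.V} (hn : G.ncomp S = 2)
    (hab : ¬ G.reach S a b) (c : G.V) : G.reach S c a ∨ G.reach S c b := by
  by_contra hc
  push_neg at hc
  haveI : Fintype (Quotient (Relation.EqvGen.setoid (G.step S))) := Fintype.ofFinite _
  have hcard : Fintype.card (Quotient (Relation.EqvGen.setoid (G.step S))) = 2 := by
    rw [← Nat.card_eq_fintype_card]; exact hn
  have h3 : ({Quotient.mk _ a, Quotient.mk _ b, Quotient.mk _ c} :
      Finset (Quotient (Relation.EqvGen.setoid (G.step S)))).card = 3 := by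
    rw [Finset.card_insert_of_notMem, Finset.card_insert_of_notMem, Finset.card_singleton]
    · simp only [Finset.mem_singleton]
      exact fun hh => hc.2 (reach_symm (quot_mk_eq_iff.mp hh))
    · simp only [Finset.mem_insert, Finset.mem_singleton]
      rintro (hh | hh)
      · exact hab (quot_mk_eq_iff.mp hh)
      · exact hc.1 (reach_symm (quot_mk_eq_iff.mp hh))
  have hle := Finset.card_le_univ ({Quotient.mk _ a, Quotient.mk _ b, Quotient.mk _ c} :
      Finset (Quotient (Relation.EqvGen.setoid (G.step S))))
  rw [h3, hcard] at hle
  omega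

lemma pigeon3 {S : Finset G.E} (hn : G.ncomp S = 2) (a b c : G.V) :
    G.reach S a b ∨ G.reach S a c ∨ G.reach S b c := by
  by_contra hc
  push_neg at hc
  rcases two_classes hn hc.1 c with h | h
  · exact hc.2.1 (reach_symm h)
  · exact hc.2.2 (reach_symm h)

noncomputable def otherEnd (G : Multigraph) (e : G.E) (x : G.V) : G.V :=
  if G.fst e = x then G.snd e else G.fst e

lemma endpoints_eq {e : G.E} {x : G.V} (h : G.fst e = x ∨ G.snd e = x) :
    (G.fst e = x ∧ G.snd e = G.otherEnd e x) ∨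
    (G.snd e = x ∧ G.fst e = G.otherEnd e x ∧ G.fst e ≠ x) := by
  rcases h with h | h
  · exact Or.inl ⟨h, (if_pos h).symm⟩
  · by_cases h' : G.fst e = x
    · exact Or.inl ⟨h', (if_pos h').symm⟩
    · exact Or.inr ⟨h, (if_neg h').symm, h'⟩

lemma step_otherEnd {S : Finset G.E} {e : G.E} {x : G.V}
    (hinc : G.fst e = x ∨ G.snd e = x) (he : e ∈ S) : G.step S x (G.otherEnd e x) := by
  rcases endpoints_eq hinc with ⟨h1, h2⟩ | ⟨h1, h2, _⟩
  · exact ⟨e, he, Or.inl ⟨h1, h2⟩⟩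
  · exact ⟨e, he, Or.inr ⟨h2, h1⟩⟩

lemma reach_ends_iff {S : Finset G.E} {e : G.E} {x : G.V}
    (hinc : G.fst e = x ∨ G.snd e = x) :
    G.reach S (G.fst e) (G.snd e) ↔ G.reach S x (G.otherEnd e x) := by
  rcases endpoints_eq hinc with ⟨h1, h2⟩ | ⟨h1, h2, _⟩
  · rw [h1, h2]
  · rw [h1, h2]
    exact ⟨fun h => reach_symm h, fun h => reach_symm h⟩

lemma chain_concat {r : G.V → G.V → Prop} {b : G.V} :
    ∀ {a : G.V} {m : List G.V}, List.Chain r a (m ++ [b]) →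
      List.Chain r a m ∧ r ((a :: m).getLast (by simp)) b := by
  intro a m
  induction m generalizing a with
  | nil => intro h; simpa [List.Chain] using h
  | cons c m ih =>
    intro h
    rw [List.cons_append] at h
    unfold List.Chain at h
    rw [List.chain_cons] at h
    obtain ⟨hac, hrest⟩ := h
    obtain ⟨h1, h2⟩ := ih hrest
    refine ⟨List.chain_cons.mpr ⟨hac, h1⟩, ?_⟩
    rwa [List.getLast_cons (by simp)]

lemma chain_erase {S : Finset G.E} {e : G.E} {x : G.V}
    (hinc : G.fst e = x ∨ G.snd e = x) :
    ∀ {z : G.V} {m : List G.V}, List.Chain (G.step S) z m → (∀ u ∈ z :: m, u ≠ x) →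
      List.Chain (G.step (S.erase e)) z m := by
  intro z m
  induction m generalizing z with
  | nil => intro _ _; exact List.Chain.nil
  | cons b m ih =>
    intro h hmem
    unfold List.Chain at h
    rw [List.chain_cons] at h
    obtain ⟨⟨f, hf, hor⟩, hrest⟩ := h
    refine List.chain_cons.mpr ⟨⟨f, Finset.mem_erase.mpr ⟨?_, hf⟩, hor⟩, ih hrest ?_⟩
    · rintro rfl
      have hz : z ≠ x := hmem z (by simp)
      have hb : b ≠ x := hmem b (by simp)
      rcases hor with ⟨h1, h2⟩ | ⟨h1, h2⟩ <;> rcases hinc with h3 | h3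
      · exact hz (h1 ▸ h3)
      · exact hb (h2 ▸ h3)
      · exact hb (h1 ▸ h3)
      · exact hz (h2 ▸ h3)
    · intro u hu
      exact hmem u (by simp at hu ⊢; tauto)

lemma reach_iff_rtg {S : Finset G.E} {a b : G.V} :
    G.reach S a b ↔ Relation.ReflTransGen (G.step S) a b := by
  constructor
  · intro h
    induction h with
    | rel u v h => exact Relation.ReflTransGen.single h
    | refl u => exact Relation.ReflTransGen.refl
    | symm u v _ ih =>
      haveI : Std.Symm (G.step S) := ⟨fun _ _ h => step_symm h⟩
      exact Std.Symm.symm _ _ ih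
    | trans u v w _ _ ih1 ih2 => exact ih1.trans ih2
  · intro h
    induction h with
    | refl => exact reach_refl S a
    | tail _ h ih => exact reach_trans ih (Relation.EqvGen.rel _ _ h)

lemma getLast_mid {α : Type*} (c a : α) (l1 : List α) :
    (c :: (l1 ++ [a])).getLast (by simp) = a := by
  induction l1 generalizing c with
  | nil => rfl
  | cons d t ih =>
    rw [List.cons_append, List.getLast_cons (by simp)]
    exact ih d

lemma exists_last_edge {S : Finset G.E} {z x : G.V} (h : G.reach S z x) (hzx : z ≠ x) :
    ∃ e ∈ S, (G.fst e = x ∨ G.snd e = x) ∧ G.reach (S.erase e) z (G.otherEnd e x) := by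
  obtain ⟨l0, hc0, hl0⟩ := List.exists_isChain_cons_of_relationReflTransGen (reach_iff_rtg.mp h)
  suffices H : ∀ n, ∀ l : List G.V, l.length ≤ n → List.Chain (G.step S) z l →
      (z :: l).getLast (by simp) = x →
      ∃ e ∈ S, (G.fst e = x ∨ G.snd e = x) ∧ G.reach (S.erase e) z (G.otherEnd e x) by
    exact H l0.length l0 le_rfl hc0 hl0
  intro n
  induction n with
  | zero =>
    intro l hlen hc hl
    have hnil : l = [] := List.eq_nil_of_length_eq_zero (Nat.le_zero.mp hlen)
    subst hnil
    exact absurd (by simpa using hl) hzx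
  | succ n ih =>
  intro l hlen hc hl
  by_cases hlne' : l = []
  · subst hlne'; exact absurd (by simpa using hl) hzx
  have hlne : l ≠ [] := hlne'
  by_cases hx : x ∈ l.dropLast
  · obtain ⟨m₁, m₂, hm⟩ := List.append_of_mem hx
    have hldecomp : l = m₁ ++ x :: (m₂ ++ [l.getLast hlne]) := by
      conv_lhs => rw [← List.dropLast_append_getLast hlne, hm]
      simp
    rw [hldecomp] at hc
    have hc1 : List.Chain (G.step S) z (m₁ ++ [x]) := (List.isChain_cons_split.mp hc).1
    have hlast : ((z :: (m₁ ++ [x])).getLast (by simp)) = x := getLast_mid z x m₁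
    refine ih (m₁ ++ [x]) ?_ hc1 hlast
    have hll := congrArg List.length hldecomp
    simp only [List.length_append, List.length_cons, List.length_singleton] at hll ⊢
    omega
  · set m := l.dropLast with hm
    have hlx : l.getLast hlne = x := by
      rw [← hl, List.getLast_cons hlne]
    have hldecomp : l = m ++ [x] := by
      rw [hm, ← hlx, List.dropLast_append_getLast hlne]
    rw [hldecomp] at hc
    obtain ⟨hc1, hstep⟩ := chain_concat hc
    set w := ((z :: m).getLast (by simp)) with hw
    have hwmem : w ∈ z :: m := List.getLast_mem _
    have hallne : ∀ u ∈ z :: m, u ≠ x := by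
      intro u hu
      rcases List.mem_cons.mp hu with rfl | hu
      · exact hzx
      · exact fun h' => hx (h' ▸ hu)
    have hwx : w ≠ x := hallne w hwmem
    obtain ⟨e, he, hor⟩ := hstep
    have hinc : G.fst e = x ∨ G.snd e = x := by
      rcases hor with ⟨h1, h2⟩ | ⟨h1, h2⟩
      · exact Or.inr h2
      · exact Or.inl h1
    have hother : G.otherEnd e x = w := by
      rcases hor with ⟨h1, h2⟩ | ⟨h1, h2⟩
      · rw [otherEnd, if_neg (by rw [h1]; exact hwx), h1]
      · rw [otherEnd, if_pos h1, h2]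
    refine ⟨e, he, hinc, ?_⟩
    rw [hother]
    have hc2 := chain_erase hinc hc1 hallne
    exact reach_iff_rtg.mpr (List.relationReflTransGen_of_exists_isChain_cons m hc2 hw.symm)

lemma tree_reach {T : Finset G.E} (hT : G.IsSpanningTree T) (a b : G.V) : G.reach T a b :=
  reach_all_of_ncomp_one hT.1 a b

lemma tree_erase {T : Finset G.E} {e : G.E} (hT : G.IsSpanningTree T) (he : e ∈ T) :
    G.IsTwoForest (T.erase e) ∧ ¬ G.reach (T.erase e) (G.fst e) (G.snd e) := by
  have hcardpos : 1 ≤ T.card := Finset.card_pos.mpr ⟨e, he⟩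
  have hcard : (T.erase e).card = T.card - 1 := Finset.card_erase_of_mem he
  have hnr : ¬ G.reach (T.erase e) (G.fst e) (G.snd e) := by
    intro hr
    have h1 : G.ncomp (insert e (T.erase e)) = G.ncomp (T.erase e) := ncomp_insert_of_reach hr
    rw [Finset.insert_erase he] at h1
    have h2 := card_le_ncomp_add_card (G := G) (T.erase e)
    rw [hcard, ← h1, hT.1] at h2
    have := hT.2
    omega
  have hdrop := ncomp_insert_of_not_reach hnr
  rw [Finset.insert_erase he, hT.1] at hdrop
  refine ⟨⟨hdrop.symm, ?_⟩, hnr⟩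
  rw [hcard]
  have := hT.2
  omega

lemma twoforest_insert {S : Finset G.E} {e : G.E} (hS : G.IsTwoForest S)
    (h : ¬ G.reach S (G.fst e) (G.snd e)) :
    e ∉ S ∧ G.IsSpanningTree (insert e S) := by
  have heS : e ∉ S := fun he => h (reach_of_mem he)
  have hdrop := ncomp_insert_of_not_reach h
  rw [hS.1] at hdrop
  refine ⟨heS, ⟨by omega, ?_⟩⟩
  rw [Finset.card_insert_of_notMem heS]
  have := hS.2
  omega

lemma exists_spanning_tree (hG : G.IsConnected) : ∃ T : Finset G.E, G.IsSpanningTree T := by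
  classical
  obtain ⟨T, hT1, hTmin⟩ := Finset.exists_min_image
    (Finset.univ.filter fun S : Finset G.E => G.ncomp S = 1) Finset.card
    ⟨Finset.univ, by simp [Finset.mem_filter]; exact hG⟩
  rw [Finset.mem_filter] at hT1
  have hT1 : G.ncomp T = 1 := hT1.2
  have hbridges : ∀ e ∈ T, ¬ G.reach (T.erase e) (G.fst e) (G.snd e) := by
    intro e he hr
    have h1 : G.ncomp (insert e (T.erase e)) = G.ncomp (T.erase e) := ncomp_insert_of_reach hr
    rw [Finset.insert_erase he, hT1] at h1
    have h2 := hTmin (T.erase e) (by rw [Finset.mem_filter]; exact ⟨Finset.mem_univ _, h1.symm⟩)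
    rw [Finset.card_erase_of_mem he] at h2
    have := Finset.card_pos.mpr ⟨e, he⟩
    omega
  have := ncomp_add_card_of_bridges hbridges
  exact ⟨T, hT1, by omega⟩

lemma core_count {x y : G.V} (hxy : x ≠ y) :
    ∑ e ∈ Finset.univ.filter (fun e : G.E => G.fst e = x ∨ G.snd e = x),
      (Finset.univ.filter (fun S : Finset G.E =>
        G.IsTwoForest S ∧ ¬ G.reach S x y ∧ G.reach S (G.otherEnd e x) y)).card
    = (Finset.univ.filter (fun S : Finset G.E => G.IsSpanningTree S)).card := by
  classical
  have hLHS : (∑ e ∈ Finset.univ.filter (fun e : G.E => G.fst e = x ∨ G.snd e = x),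
      (Finset.univ.filter (fun S : Finset G.E =>
        G.IsTwoForest S ∧ ¬ G.reach S x y ∧ G.reach S (G.otherEnd e x) y)).card)
      = (Finset.univ.filter (fun p : G.E × Finset G.E =>
        (G.fst p.1 = x ∨ G.snd p.1 = x) ∧ G.IsTwoForest p.2 ∧ ¬ G.reach p.2 x y ∧
          G.reach p.2 (G.otherEnd p.1 x) y)).card := by
    rw [Finset.card_filter, Fintype.sum_prod_type, Finset.sum_filter]
    refine Finset.sum_congr rfl fun e _ => ?_
    by_cases hinc : G.fst e = x ∨ G.snd e = x
    · rw [if_pos hinc, Finset.card_filter]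
      refine Finset.sum_congr rfl fun S _ => ?_
      simp [hinc]
    · simp [hinc]
  rw [hLHS]
  refine Finset.card_nbij (fun p => insert p.1 p.2) ?_ ?_ ?_
  · intro p hp
    simp only [Finset.coe_filter, Set.mem_setOf_eq] at hp ⊢
    obtain ⟨-, hinc, hTF, hnxy, hvy⟩ := hp
    have hnxv : ¬ G.reach p.2 x (G.otherEnd p.1 x) := fun h => hnxy (reach_trans h hvy)
    have hnr : ¬ G.reach p.2 (G.fst p.1) (G.snd p.1) := fun h =>
      hnxv ((reach_ends_iff hinc).mp h)
    exact ⟨Finset.mem_univ _, (twoforest_insert hTF hnr).2⟩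
  · intro p hp q hq heq
    simp only [Finset.coe_filter, Set.mem_setOf_eq] at hp hq
    obtain ⟨-, hincp, hTFp, hnxyp, hvyp⟩ := hp
    obtain ⟨-, hincq, hTFq, hnxyq, hvyq⟩ := hq
    have hnotp : p.1 ∉ p.2 := fun hm =>
      hnxyp (reach_trans (Relation.EqvGen.rel _ _ (step_otherEnd hincp hm)) hvyp)
    have hnotq : q.1 ∉ q.2 := fun hm =>
      hnxyq (reach_trans (Relation.EqvGen.rel _ _ (step_otherEnd hincq hm)) hvyq)
    simp only at heq
    by_cases hef : p.1 = q.1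
    · have h2 : p.2 = q.2 := by
        have h3 := congrArg (fun s => Finset.erase s p.1) heq
        rw [Finset.erase_insert hnotp] at h3
        rw [hef, Finset.erase_insert hnotq] at h3
        exact h3
      exact Prod.ext hef h2
    · exfalso
      set e := p.1 with he
      set f := q.1 with hf
      set S := p.2 with hS
      set S' := q.2 with hS'
      have hfS : f ∈ S := by
        have : f ∈ insert e S := by rw [heq]; exact Finset.mem_insert_self f S'
        exact (Finset.mem_insert.mp this).resolve_left fun hh => hef hh.symm
      have hxvf : G.reach S x (G.otherEnd f x) :=
        Relation.EqvGen.rel _ _ (step_otherEnd hincq hfS)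
      have hS'eq : S' = insert e (S.erase f) := by
        have h1 : S' = (insert f S').erase f := (Finset.erase_insert hnotq).symm
        rw [h1, ← heq]
        ext g
        simp only [Finset.mem_erase, Finset.mem_insert]
        constructor
        · rintro ⟨hg1, hg2 | hg2⟩
          · exact Or.inl hg2
          · exact Or.inr ⟨hg1, hg2⟩
        · rintro (hg | ⟨hg1, hg2⟩)
          · exact ⟨by rw [hg]; exact fun hh => hef hh, Or.inl hg⟩
          · exact ⟨hg1, Or.inr hg2⟩
      have hS0S : S.erase f ⊆ S := Finset.erase_subset f S
      have hS0S' : S.erase f ⊆ S' := by rw [hS'eq]; exact Finset.subset_insert _ _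
      have hvfy : G.reach S' (G.otherEnd f x) y := hvyq
      rw [hS'eq] at hvfy
      rcases reach_insert_iff.mp hvfy with h' | ⟨h1, h2⟩ | ⟨h1, h2⟩
      · exact hnxyp (reach_trans hxvf (reach_mono hS0S h'))
      · rcases endpoints_eq hincp with ⟨hfx, -⟩ | ⟨hsx, -, -⟩
        · rw [hfx] at h1
          exact hnxyq (reach_trans (reach_symm (reach_mono hS0S' h1)) hvyq)
        · rw [hsx] at h2
          exact hnxyp (reach_mono hS0S h2)
      · rcases endpoints_eq hincp with ⟨hfx, -⟩ | ⟨hsx, -, -⟩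
        · rw [hfx] at h2
          exact hnxyp (reach_mono hS0S h2)
        · rw [hsx] at h1
          exact hnxyq (reach_trans (reach_symm (reach_mono hS0S' h1)) hvyq)
  · intro T hT
    simp only [Finset.coe_filter, Set.mem_setOf_eq] at hT
    obtain ⟨-, hTtree⟩ := hT
    have hyx : G.reach T y x := tree_reach hTtree y x
    obtain ⟨e, he, hinc, hreach⟩ := exists_last_edge hyx (Ne.symm hxy)
    obtain ⟨hTF, hnr⟩ := tree_erase hTtree he
    have hnxv : ¬ G.reach (T.erase e) x (G.otherEnd e x) := fun h =>
      hnr ((reach_ends_iff hinc).mpr h)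
    have hnxy : ¬ G.reach (T.erase e) x y := fun h =>
      hnxv (reach_trans h hreach)
    refine ⟨(e, T.erase e), ?_, ?_⟩
    · simp only [Finset.coe_filter, Set.mem_setOf_eq]
      exact ⟨Finset.mem_univ _, hinc, hTF, hnxy, reach_symm hreach⟩
    · exact Finset.insert_erase he

lemma cross_id (x y v : G.V) :
    (Finset.univ.filter (fun S : Finset G.E => G.IsTwoForest S ∧ ¬ G.reach S x y)).card
      + (Finset.univ.filter (fun S : Finset G.E => G.IsTwoForest S ∧ ¬ G.reach S x v)).card
    = (Finset.univ.filter (fun S : Finset G.E => G.IsTwoForest S ∧ ¬ G.reach S v y)).card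
      + 2 * (Finset.univ.filter (fun S : Finset G.E =>
          G.IsTwoForest S ∧ ¬ G.reach S x y ∧ G.reach S v y)).card := by
  classical
  simp only [Finset.card_filter]
  rw [← Finset.sum_add_distrib, Finset.mul_sum, ← Finset.sum_add_distrib]
  refine Finset.sum_congr rfl fun S _ => ?_
  by_cases hTF : G.IsTwoForest S
  · have hpigeon := pigeon3 hTF.1 x y v
    by_cases hA : G.reach S x y <;> by_cases hB : G.reach S v y <;>
      by_cases hC : G.reach S x v
    · norm_num [hTF, hA, hB, hC]
    · exact absurd (reach_trans hA (reach_symm hB)) hC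
    · exact absurd (reach_trans (reach_symm hC) hA) hB
    · norm_num [hTF, hA, hB, hC]
    · exact absurd (reach_trans hC hB) hA
    · norm_num [hTF, hA, hB, hC]
    · norm_num [hTF, hA, hB, hC]
    · rcases hpigeon with h | h | h
      · exact absurd h hA
      · exact absurd h hC
      · exact absurd (reach_symm h) hB
  · simp [hTF]

lemma kappa_eq_card :
    G.kappa = (Finset.univ.filter (fun S : Finset G.E => G.IsSpanningTree S)).card := by
  rw [kappa, Nat.card_eq_fintype_card, Fintype.card_subtype]

lemma kappa2Sep_eq_card (x y : G.V) : G.kappa2Sep x y =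
    (Finset.univ.filter (fun S : Finset G.E => G.IsTwoForest S ∧ ¬ G.reach S x y)).card := by
  rw [kappa2Sep, Nat.card_eq_fintype_card, Fintype.card_subtype]

lemma kappa_pos (hG : G.IsConnected) : 0 < G.kappa := by
  obtain ⟨T, hT⟩ := exists_spanning_tree hG
  rw [kappa_eq_card]
  exact Finset.card_pos.mpr ⟨T, by simp [hT]⟩

lemma res_symm (x y : G.V) : G.res x y = G.res y x := by
  rw [res, res, kappa2Sep_eq_card, kappa2Sep_eq_card]
  congr 2
  refine congrArg Finset.card ?_
  apply Finset.filter_congr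
  intro S _
  simp only [and_congr_right_iff]
  exact fun _ => ⟨fun h hr => h (reach_symm hr), fun h hr => h (reach_symm hr)⟩

lemma card_inc_cast (x : G.V) :
    ((Nat.card {e : G.E // G.fst e = x ∨ G.snd e = x} : ℕ) : ℝ)
      = ∑ e : G.E, (if G.fst e = x ∨ G.snd e = x then (1:ℝ) else 0) := by
  rw [Nat.card_eq_fintype_card, Fintype.card_subtype, Finset.card_filter, Nat.cast_sum]
  refine Finset.sum_congr rfl fun e _ => ?_
  split_ifs <;> simp

lemma card_pair_cast (x v : G.V) :
    ((Nat.card {e : G.E // (G.fst e = x ∧ G.snd e = v) ∨ (G.fst e = v ∧ G.snd e = x)} : ℕ) : ℝ)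
      = ∑ e : G.E, (if (G.fst e = x ∧ G.snd e = v) ∨ (G.fst e = v ∧ G.snd e = x)
          then (1:ℝ) else 0) := by
  rw [Nat.card_eq_fintype_card, Fintype.card_subtype, Finset.card_filter, Nat.cast_sum]
  refine Finset.sum_congr rfl fun e _ => ?_
  split_ifs <;> simp

lemma inner_sum_eval (x y : G.V) (e : G.E) :
    (∑ v, if (G.fst e = x ∧ G.snd e = v) ∨ (G.fst e = v ∧ G.snd e = x)
        then G.res v y else 0)
      = if G.fst e = x ∨ G.snd e = x then G.res (G.otherEnd e x) y else 0 := by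
  by_cases h1 : G.fst e = x
  · have hsnd : G.snd e ≠ x := fun h => G.no_loop e (h1.trans h.symm)
    rw [if_pos (Or.inl h1)]
    have hcond : ∀ v, ((G.fst e = x ∧ G.snd e = v) ∨ (G.fst e = v ∧ G.snd e = x))
        ↔ G.snd e = v := by
      intro v
      constructor
      · rintro (⟨-, h⟩ | ⟨hf, hs⟩)
        · exact h
        · exact absurd hs hsnd
      · exact fun h => Or.inl ⟨h1, h⟩
    rw [Finset.sum_congr rfl fun v _ => if_congr (hcond v) rfl rfl]
    rw [Finset.sum_ite_eq, if_pos (Finset.mem_univ _), otherEnd, if_pos h1]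
  · by_cases h2 : G.snd e = x
    · rw [if_pos (Or.inr h2)]
      have hcond : ∀ v, ((G.fst e = x ∧ G.snd e = v) ∨ (G.fst e = v ∧ G.snd e = x))
          ↔ G.fst e = v := by
        intro v
        constructor
        · rintro (⟨hf, -⟩ | ⟨hf, -⟩)
          · exact absurd hf h1
          · exact hf
        · exact fun h => Or.inr ⟨h, h2⟩
      rw [Finset.sum_congr rfl fun v _ => if_congr (hcond v) rfl rfl]
      rw [Finset.sum_ite_eq, if_pos (Finset.mem_univ _), otherEnd, if_neg h1]
    · rw [if_neg (by tauto)]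
      refine Finset.sum_eq_zero fun v _ => ?_
      rw [if_neg (by tauto)]

lemma sum_lap_mul_res (x y : G.V) :
    (∑ v, G.lap x v * G.res v y) =
      ∑ e, (if G.fst e = x ∨ G.snd e = x
        then (G.res x y - G.res (G.otherEnd e x) y) else 0) := by
  have hexp : ∀ v, G.lap x v * G.res v y =
      (if x = v then ((Nat.card {e : G.E // G.fst e = x ∨ G.snd e = x} : ℕ) : ℝ)
          * G.res v y else 0)
      - ((Nat.card {e : G.E // (G.fst e = x ∧ G.snd e = v) ∨ (G.fst e = v ∧ G.snd e = x)}
          : ℕ) : ℝ) * G.res v y := by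
    intro v
    rw [lap]
    by_cases h : x = v <;> simp [h, sub_mul]
  simp only [hexp]
  rw [Finset.sum_sub_distrib]
  have h1 : (∑ v, if x = v then
      ((Nat.card {e : G.E // G.fst e = x ∨ G.snd e = x} : ℕ) : ℝ) * G.res v y else 0)
      = ∑ e, (if G.fst e = x ∨ G.snd e = x then G.res x y else 0) := by
    rw [Finset.sum_ite_eq, if_pos (Finset.mem_univ x), card_inc_cast, Finset.sum_mul]
    refine Finset.sum_congr rfl fun e _ => ?_
    split_ifs <;> simp
  have h2 : (∑ v, ((Nat.card {e : G.E // (G.fst e = x ∧ G.snd e = v) ∨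
        (G.fst e = v ∧ G.snd e = x)} : ℕ) : ℝ) * G.res v y)
      = ∑ e, (if G.fst e = x ∨ G.snd e = x then G.res (G.otherEnd e x) y else 0) := by
    have hm : ∀ v, ((Nat.card {e : G.E // (G.fst e = x ∧ G.snd e = v) ∨
        (G.fst e = v ∧ G.snd e = x)} : ℕ) : ℝ) * G.res v y
        = ∑ e, (if (G.fst e = x ∧ G.snd e = v) ∨ (G.fst e = v ∧ G.snd e = x)
            then G.res v y else 0) := by
      intro v
      rw [card_pair_cast, Finset.sum_mul]
      refine Finset.sum_congr rfl fun e _ => ?_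
      split_ifs <;> simp
    simp only [hm]
    rw [Finset.sum_comm]
    exact Finset.sum_congr rfl fun e _ => inner_sum_eval x y e
  rw [h1, h2, ← Finset.sum_sub_distrib]
  refine Finset.sum_congr rfl fun e _ => ?_
  split_ifs <;> simp

lemma key_sum (hG : G.IsConnected) (x y : G.V) :
    (∑ e, if G.fst e = x ∨ G.snd e = x then
      (G.res x y - G.res (G.otherEnd e x) y + G.res x (G.otherEnd e x)) else 0)
    = 2 - 2 * (if x = y then (1:ℝ) else 0) := by
  have hκ : (0:ℝ) < (G.kappa : ℝ) := by exact_mod_cast kappa_pos hG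
  have hbr : ∀ v : G.V, G.res x y - G.res v y + G.res x v
      = 2 * ((Finset.univ.filter (fun S : Finset G.E =>
          G.IsTwoForest S ∧ ¬ G.reach S x y ∧ G.reach S v y)).card : ℝ) / (G.kappa : ℝ) := by
    intro v
    have hid := cross_id (G := G) x y v
    have hcast : ((Finset.univ.filter (fun S : Finset G.E =>
          G.IsTwoForest S ∧ ¬ G.reach S x y)).card : ℝ)
        + ((Finset.univ.filter (fun S : Finset G.E =>
          G.IsTwoForest S ∧ ¬ G.reach S x v)).card : ℝ)
        = ((Finset.univ.filter (fun S : Finset G.E =>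
          G.IsTwoForest S ∧ ¬ G.reach S v y)).card : ℝ)
        + 2 * ((Finset.univ.filter (fun S : Finset G.E =>
          G.IsTwoForest S ∧ ¬ G.reach S x y ∧ G.reach S v y)).card : ℝ) := by
      exact_mod_cast hid
    rw [res, res, res, kappa2Sep_eq_card, kappa2Sep_eq_card, kappa2Sep_eq_card]
    field_simp
    linarith
  by_cases hxy : x = y
  · subst hxy
    rw [if_pos rfl]
    have hzero : ∀ v : G.V, (Finset.univ.filter (fun S : Finset G.E =>
        G.IsTwoForest S ∧ ¬ G.reach S x x ∧ G.reach S v x)).card = 0 := by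
      intro v
      rw [Finset.card_eq_zero, Finset.filter_eq_empty_iff]
      rintro S - ⟨-, h, -⟩
      exact h (reach_refl S x)
    have : ∀ e : G.E, (if G.fst e = x ∨ G.snd e = x then
        (G.res x x - G.res (G.otherEnd e x) x + G.res x (G.otherEnd e x)) else 0) = 0 := by
      intro e
      split_ifs with h
      · rw [hbr (G.otherEnd e x), hzero]; simp
      · rfl
    rw [Finset.sum_congr rfl fun e _ => this e]
    simp
  · rw [if_neg hxy]
    rw [Finset.sum_congr rfl fun e _ => if_congr Iff.rfl (hbr (G.otherEnd e x)) rfl]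
    rw [← Finset.sum_filter]
    have hstep : (∑ e ∈ Finset.univ.filter (fun e : G.E => G.fst e = x ∨ G.snd e = x),
        2 * ((Finset.univ.filter (fun S : Finset G.E =>
          G.IsTwoForest S ∧ ¬ G.reach S x y ∧ G.reach S (G.otherEnd e x) y)).card : ℝ)
            / (G.kappa : ℝ))
        = ((∑ e ∈ Finset.univ.filter (fun e : G.E => G.fst e = x ∨ G.snd e = x),
          ((Finset.univ.filter (fun S : Finset G.E =>
            G.IsTwoForest S ∧ ¬ G.reach S x y ∧ G.reach S (G.otherEnd e x) y)).card : ℕ)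
            : ℕ) : ℝ) * (2 / (G.kappa : ℝ)) := by
      rw [Nat.cast_sum, Finset.sum_mul]
      refine Finset.sum_congr rfl fun e _ => ?_
      ring
    rw [hstep, core_count hxy, ← kappa_eq_card]
    field_simp
    norm_num

theorem lap_res_outer_product' (hG : G.IsConnected) :
    (1 : Matrix G.V G.V ℝ) + (1/2 : ℝ) • (G.lap * G.resMatrix) =
      Matrix.vecMulVec G.mu (fun _ => 1) := by
  ext x y
  simp only [Matrix.add_apply, Matrix.one_apply, Matrix.smul_apply, Matrix.mul_apply,
    Matrix.vecMulVec_apply, smul_eq_mul, mul_one, resMatrix]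
  rw [sum_lap_mul_res, mu]
  have hB : (∑ e, (if G.fst e = x ∨ G.snd e = x
        then G.res (G.fst e) (G.snd e) else 0))
      = ∑ e, (if G.fst e = x ∨ G.snd e = x then G.res x (G.otherEnd e x) else 0) := by
    refine Finset.sum_congr rfl fun e _ => ?_
    split_ifs with h
    · rcases endpoints_eq h with ⟨h1, h2⟩ | ⟨h1, h2, -⟩
      · rw [h1, h2]
      · rw [h1, h2, res_symm]
    · rfl
  have hkey := key_sum hG x y
  have hsplit : (∑ e, if G.fst e = x ∨ G.snd e = x then
      (G.res x y - G.res (G.otherEnd e x) y + G.res x (G.otherEnd e x)) else 0)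
      = (∑ e, (if G.fst e = x ∨ G.snd e = x
          then (G.res x y - G.res (G.otherEnd e x) y) else 0))
        + ∑ e, (if G.fst e = x ∨ G.snd e = x then G.res x (G.otherEnd e x) else 0) := by
    rw [← Finset.sum_add_distrib]
    refine Finset.sum_congr rfl fun e _ => ?_
    split_ifs <;> simp
  rw [hsplit] at hkey
  rw [hB]
  linarith

end Multigraph

theorem lap_res_outer_product (G : Multigraph) (hG : G.IsConnected) :
    (1 : Matrix G.V G.V ℝ) + (1/2 : ℝ) • (G.lap * G.resMatrix) =
      Matrix.vecMulVec G.mu (fun _ => 1) := by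
  exact Multigraph.lap_res_outer_product' hG
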